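/- Let Z_1, ..., Z_{N+1} be exchangeable real-valued random variables such that ties occur with probability zero (i.e., P(Z_i = Z_j) = 0 for i ≠ j). Let Q be the ⌈(1-α)(N+1)⌉-th smallest element of {Z_1, ..., Z_N}, assuming ⌈(1-α)(N+1)⌉ ≤ N. Then P(Z_{N+1} ≤ Q) = ⌈(1-α)(N+1)⌉ / (N+1). -/

import Mathlib

/-!
Let `rank v j` count the entries of `v` strictly below `v j`. Since `kthSmallest` reads off a
sorted copy of the first `N` values, `Z (Fin.last N) ≤ Q` holds exactly when the rank of the last
coordinate is below `n = ⌈(1 - α)(N + 1)⌉`. Exchangeability gives every coordinate's rank the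
same law, and without ties the ranks are a permutation of `0, …, N`, so exactly `n` coordinates
have rank below `n`. Summing over coordinates, `(N + 1) · P(rank < n) = n`.
-/

open MeasureTheory ProbabilityTheory
open scoped ENNReal

/-- The k-th smallest element (1-indexed) of a finite tuple of reals. -/
noncomputable def kthSmallest {N : ℕ} (v : Fin N → ℝ) (k : ℕ) : ℝ :=
  (List.insertionSort (· ≤ ·) (List.ofFn v)).getD (k - 1) 0

open Finset

namespace Tuple

variable {α : Type*} [LinearOrder α] {m : ℕ}

/-- Zero-based: for injective `v`, the entry `v j` is the `(rank v j + 1)`-th smallest. -/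
def rank (v : Fin m → α) (j : Fin m) : ℕ := #{i | v i < v j}

theorem rank_comp_perm (v : Fin m → α) (σ : Equiv.Perm (Fin m)) (j : Fin m) :
    rank (v ∘ σ) j = rank v (σ j) :=
  card_equiv σ (by simp)

theorem rank_sort_apply {v : Fin m → α} (hv : Function.Injective v) (k : Fin m) :
    rank v (sort v k) = k := by
  have hmono : StrictMono (v ∘ sort v) :=
    (monotone_sort v).strictMono_of_injective (hv.comp (sort v).injective)
  rw [← rank_comp_perm, rank]
  simp only [hmono.lt_iff_lt, filter_gt_eq_Iio, Fin.card_Iio]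

theorem card_rank_lt {v : Fin m → α} (hv : Function.Injective v) {n : ℕ} (hn : n ≤ m) :
    #{j | rank v j < n} = n := by
  rw [← card_equiv (sort v) (s := {k : Fin m | (k : ℕ) < n}) (by simp [rank_sort_apply hv]),
    Fin.card_filter_val_lt, min_eq_right hn]

theorem le_apply_iff_card_lt_le {u : Fin m → α} (hu : Monotone u) (x : α) (k : Fin m) :
    x ≤ u k ↔ #{i | u i < x} ≤ k := by
  rw [← not_lt, ← not_lt, lt_card_lt_iff_apply_lt_of_monotone hu]

theorem rank_last (v : Fin (m + 1) → α) :
    rank v (Fin.last m) = #{i : Fin m | v i.castSucc < v (Fin.last m)} := by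
  simp only [rank, card_filter, Fin.sum_univ_castSucc, lt_irrefl, if_false, add_zero]

end Tuple

theorem List.insertionSort_ofFn {α : Type*} [LinearOrder α] {m : ℕ} (v : Fin m → α) :
    (List.ofFn v).insertionSort (· ≤ ·) = List.ofFn (v ∘ Tuple.sort v) :=
  ((List.perm_insertionSort _ _).trans ((Tuple.sort v).ofFn_comp_perm v).symm).eq_of_pairwise'
    (List.pairwise_insertionSort _ _) (Tuple.monotone_sort v).sortedLE_ofFn.pairwise

open Tuple

theorem kthSmallest_eq_sort {N : ℕ} (w : Fin N → ℝ) {k : ℕ} (hk : k - 1 < N) :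
    kthSmallest w k = w (sort w ⟨k - 1, hk⟩) := by
  simp [kthSmallest, List.insertionSort_ofFn, hk]

theorem le_kthSmallest_iff {N : ℕ} (w : Fin N → ℝ) (x : ℝ) {k : ℕ} (hk1 : 1 ≤ k)
    (hkN : k ≤ N) :
    x ≤ kthSmallest w k ↔ #{i | w i < x} < k := by
  rw [kthSmallest_eq_sort w (by omega), ← Function.comp_apply (f := w),
    le_apply_iff_card_lt_le (monotone_sort w),
    card_equiv (sort w) (t := {i | w i < x}) (by simp)]
  exact Nat.le_sub_one_iff_lt hk1

theorem last_le_kthSmallest_iff {N : ℕ} (v : Fin (N + 1) → ℝ) {k : ℕ} (hk1 : 1 ≤ k)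
    (hkN : k ≤ N) :
    v (Fin.last N) ≤ kthSmallest (fun i : Fin N => v i.castSucc) k ↔
      rank v (Fin.last N) < k := by
  rw [le_kthSmallest_iff _ _ hk1 hkN, rank_last]

section Exchangeable

variable {Ω : Type*} [MeasurableSpace Ω] {P : Measure Ω} {m : ℕ} {Z : Fin m → Ω → ℝ}

theorem measurable_rank (j : Fin m) : Measurable fun v : Fin m → ℝ => rank v j := by
  simp only [rank, card_filter]
  exact Finset.measurable_sum _ fun i _ => Measurable.ite
    (measurableSet_lt (measurable_pi_apply i) (measurable_pi_apply j)) measurable_const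
    measurable_const

theorem measure_rank_lt_eq (hZ : ∀ i, Measurable (Z i))
    (hexch : ∀ σ : Equiv.Perm (Fin m),
      P.map (fun ω => fun i => Z (σ i) ω) = P.map (fun ω => fun i => Z i ω))
    (n : ℕ) (j k : Fin m) :
    P {ω | rank (fun i => Z i ω) j < n} = P {ω | rank (fun i => Z i ω) k < n} := by
  have hS : MeasurableSet {v : Fin m → ℝ | rank v k < n} :=
    measurableSet_lt (measurable_rank k) measurable_const
  set σ := Equiv.swap k j
  calc P {ω | rank (fun i => Z i ω) j < n}
      = P.map (fun ω => fun i => Z (σ i) ω) {v | rank v k < n} := by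
        rw [Measure.map_apply (by fun_prop) hS]
        congr 1 with ω
        change rank _ j < n ↔ rank ((fun i => Z i ω) ∘ σ) k < n
        rw [rank_comp_perm, Equiv.swap_apply_left]
    _ = P {ω | rank (fun i => Z i ω) k < n} := by
        rw [hexch, Measure.map_apply (by fun_prop) hS]
        rfl

theorem ae_injective_of_measure_eq_zero
    (hties : ∀ i j, i ≠ j → P {ω | Z i ω = Z j ω} = 0) :
    ∀ᵐ ω ∂P, Function.Injective fun i => Z i ω := by
  have hdistinct : ∀ᵐ ω ∂P, ∀ i j, i ≠ j → Z i ω ≠ Z j ω := by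
    simp only [ae_all_iff]
    exact fun i j hij => measure_eq_zero_iff_ae_notMem.1 (hties i j hij)
  filter_upwards [hdistinct] with ω hω i j hij
  by_contra hne
  exact hω i j hne hij

theorem sum_measure_rank_lt [IsProbabilityMeasure P] (hZ : ∀ i, Measurable (Z i))
    (hinj : ∀ᵐ ω ∂P, Function.Injective fun i => Z i ω) {n : ℕ} (hn : n ≤ m) :
    ∑ j, P {ω | rank (fun i => Z i ω) j < n} = n := by
  have hmeas : ∀ j, MeasurableSet {ω | rank (fun i => Z i ω) j < n} := fun j =>
    measurableSet_lt ((measurable_rank j).comp (measurable_pi_lambda _ hZ)) measurable_const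
  calc ∑ j, P {ω | rank (fun i => Z i ω) j < n}
      = ∫⁻ ω, ∑ j, {ω | rank (fun i => Z i ω) j < n}.indicator 1 ω ∂P := by
        rw [lintegral_finsetSum _ fun j _ => measurable_one.indicator (hmeas j)]
        simp only [lintegral_indicator_one (hmeas _)]
    _ = ∫⁻ _, (n : ℝ≥0∞) ∂P := by
        refine lintegral_congr_ae ?_
        filter_upwards [hinj] with ω hω
        simp [Set.indicator_apply, sum_boole, card_rank_lt hω hn]
    _ = n := by simp

theorem measure_rank_lt_eq_div [IsProbabilityMeasure P] (hZ : ∀ i, Measurable (Z i))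
    (hexch : ∀ σ : Equiv.Perm (Fin m),
      P.map (fun ω => fun i => Z (σ i) ω) = P.map (fun ω => fun i => Z i ω))
    (hties : ∀ i j, i ≠ j → P {ω | Z i ω = Z j ω} = 0) {n : ℕ} (hn : n ≤ m)
    (j : Fin m) :
    P {ω | rank (fun i => Z i ω) j < n} = n / m := by
  have hsum := sum_measure_rank_lt hZ (ae_injective_of_measure_eq_zero hties) hn
  simp only [measure_rank_lt_eq hZ hexch n _ j, sum_const, card_univ, Fintype.card_fin,
    nsmul_eq_mul] at hsum
  rw [ENNReal.eq_div_iff (by simpa using j.pos.ne') (by simp), hsum]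

end Exchangeable

theorem stmt0 {Ω : Type*} [MeasurableSpace Ω] (P : Measure Ω) [IsProbabilityMeasure P]
    (N : ℕ) (Z : Fin (N + 1) → Ω → ℝ) (hZ : ∀ i, Measurable (Z i))
    (hexch : ∀ σ : Equiv.Perm (Fin (N + 1)),
      P.map (fun ω => fun i => Z (σ i) ω) = P.map (fun ω => fun i => Z i ω))
    (hties : ∀ i j, i ≠ j → P {ω | Z i ω = Z j ω} = 0)
    (α : ℝ) (hα : α ∈ Set.Ioo (0 : ℝ) 1)
    (hn : ⌈(1 - α) * (N + 1)⌉₊ ≤ N) :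
    P {ω | Z (Fin.last N) ω ≤
        kthSmallest (fun i : Fin N => Z i.castSucc ω) ⌈(1 - α) * (N + 1)⌉₊}
      = (⌈(1 - α) * (N + 1)⌉₊ : ℝ≥0∞) / (N + 1) := by
  set n := ⌈(1 - α) * (N + 1)⌉₊
  have hn1 : 1 ≤ n := Nat.one_le_ceil_iff.2 (mul_pos (sub_pos.2 hα.2) (by positivity))
  have hevent : {ω | Z (Fin.last N) ω ≤ kthSmallest (fun i : Fin N => Z i.castSucc ω) n} =
      {ω | rank (fun i => Z i ω) (Fin.last N) < n} :=
    Set.ext fun ω => last_le_kthSmallest_iff (fun i => Z i ω) hn1 hn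
  rw [hevent, measure_rank_lt_eq_div hZ hexch hties (by omega) (Fin.last N),
    Nat.cast_succ]
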